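/- Let M be an n-dimensional k-vector space with basis m₁, …, mₙ and let R : M ⊗ M → M ⊗ M be the k-linear map given by R(m_v ⊗ m_u) = ∑_{i,j} x_{uv}^{ji} m_i ⊗ m_j for a family of scalars (x_{uv}^{ji}). Then R is a solution of the Long equation if and only if, for all indices i, j, k, l, p, q ∈ {1, …, n}, both ∑_v x_{kv}^{ji} x_{ql}^{pv} = ∑_α x_{kl}^{jα} x_{qα}^{pi} and ∑_v x_{kv}^{ji} x_{lq}^{vp} = ∑_α x_{kl}^{jα} x_{αq}^{ip} hold. -/

import Mathlib

open TensorProduct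

noncomputable section

variable {k M : Type*} [Field k] [AddCommGroup M] [Module k M]

/-- The flip map τ : M ⊗ M → M ⊗ M, τ(m ⊗ n) = n ⊗ m. -/
def tau (k M : Type*) [Field k] [AddCommGroup M] [Module k M] :
    M ⊗[k] M →ₗ[k] M ⊗[k] M := (TensorProduct.comm k M M).toLinearMap

/-- R¹² = R ⊗ id on M ⊗ (M ⊗ M) (transported along the associator). -/
def R12 (R : M ⊗[k] M →ₗ[k] M ⊗[k] M) :
    M ⊗[k] (M ⊗[k] M) →ₗ[k] M ⊗[k] (M ⊗[k] M) :=
  (TensorProduct.assoc k M M M).toLinearMap ∘ₗ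
    TensorProduct.map R LinearMap.id ∘ₗ (TensorProduct.assoc k M M M).symm.toLinearMap

/-- R²³ = id ⊗ R on M ⊗ (M ⊗ M). -/
def R23 (R : M ⊗[k] M →ₗ[k] M ⊗[k] M) :
    M ⊗[k] (M ⊗[k] M) →ₗ[k] M ⊗[k] (M ⊗[k] M) :=
  TensorProduct.map LinearMap.id R

/-- R¹³ = (id ⊗ τ)(R ⊗ id)(id ⊗ τ) on M ⊗ (M ⊗ M). -/
def R13 (R : M ⊗[k] M →ₗ[k] M ⊗[k] M) :
    M ⊗[k] (M ⊗[k] M) →ₗ[k] M ⊗[k] (M ⊗[k] M) :=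
  TensorProduct.map LinearMap.id (tau k M) ∘ₗ R12 R ∘ₗ
    TensorProduct.map LinearMap.id (tau k M)

/-- R is a solution of the Long equation: R¹²R¹³ = R¹³R¹² and R¹²R²³ = R²³R¹². -/
def IsLongSolution (R : M ⊗[k] M →ₗ[k] M ⊗[k] M) : Prop :=
  R12 R ∘ₗ R13 R = R13 R ∘ₗ R12 R ∧ R12 R ∘ₗ R23 R = R23 R ∘ₗ R12 R

end

/-! Both sides of each Long equation are endomorphisms of `M ⊗ (M ⊗ M)`, so they agree iff
their coordinates in the basis `mₐ ⊗ (m_b ⊗ m_c)` do. Evaluating `R¹²`, `R¹³`, `R²³` on basis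
tensors and composing gives these coordinates as quadratic sums in `x`; the two families of
identities are exactly their equality, up to renaming indices. -/

open TensorProduct Module

theorem LinearMap.eq_iff_forall_repr_apply_basis {R M N ι κ : Type*} [CommSemiring R]
    [AddCommMonoid M] [AddCommMonoid N] [Module R M] [Module R N]
    (b : Basis ι R M) (c : Basis κ R N) {f g : M →ₗ[R] N} :
    f = g ↔ ∀ i j, c.repr (f (b i)) j = c.repr (g (b i)) j :=
  ⟨by rintro rfl; simp, fun h => b.ext fun i => c.ext_elem fun j => h i j⟩

section StructureConstants

variable {k M ι : Type*} [Field k] [AddCommGroup M] [Module k M] [Fintype ι]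
  (m : Basis ι k M) {x : ι → ι → ι → ι → k} {R : M ⊗[k] M →ₗ[k] M ⊗[k] M}

theorem R12_basis_tmul (hR : ∀ u v, R (m v ⊗ₜ m u) = ∑ i, ∑ j, x u v j i • (m i ⊗ₜ m j))
    (a b c : ι) :
    R12 R (m a ⊗ₜ (m b ⊗ₜ m c)) = ∑ i, ∑ j, x b a j i • (m i ⊗ₜ (m j ⊗ₜ m c)) := by
  simp [R12, hR, sum_tmul, smul_tmul']

theorem R23_basis_tmul (hR : ∀ u v, R (m v ⊗ₜ m u) = ∑ i, ∑ j, x u v j i • (m i ⊗ₜ m j))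
    (a b c : ι) :
    R23 R (m a ⊗ₜ (m b ⊗ₜ m c)) = ∑ i, ∑ j, x c b j i • (m a ⊗ₜ (m i ⊗ₜ m j)) := by
  simp [R23, hR, tmul_sum, tmul_smul]

theorem R13_basis_tmul (hR : ∀ u v, R (m v ⊗ₜ m u) = ∑ i, ∑ j, x u v j i • (m i ⊗ₜ m j))
    (a b c : ι) :
    R13 R (m a ⊗ₜ (m b ⊗ₜ m c)) = ∑ i, ∑ j, x c a j i • (m i ⊗ₜ (m b ⊗ₜ m j)) := by
  simp [R13, tau, R12_basis_tmul m hR, map_sum]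

variable [DecidableEq ι]

theorem repr_R12_comp_R13_basis_tmul
    (hR : ∀ u v, R (m v ⊗ₜ m u) = ∑ i, ∑ j, x u v j i • (m i ⊗ₜ m j)) (a b c p q r : ι) :
    (m.tensorProduct (m.tensorProduct m)).repr ((R12 R ∘ₗ R13 R) (m a ⊗ₜ (m b ⊗ₜ m c)))
      (p, q, r) = ∑ v, x b v q p * x c a r v := by
  simp [R13_basis_tmul m hR, R12_basis_tmul m hR, map_sum, Finsupp.finsetSum_apply,
    Basis.tensorProduct_repr_tmul_apply, Finsupp.single_apply, mul_ite, Finset.sum_ite_eq',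
    mul_comm]

theorem repr_R13_comp_R12_basis_tmul
    (hR : ∀ u v, R (m v ⊗ₜ m u) = ∑ i, ∑ j, x u v j i • (m i ⊗ₜ m j)) (a b c p q r : ι) :
    (m.tensorProduct (m.tensorProduct m)).repr ((R13 R ∘ₗ R12 R) (m a ⊗ₜ (m b ⊗ₜ m c)))
      (p, q, r) = ∑ v, x b a q v * x c v r p := by
  simp [R13_basis_tmul m hR, R12_basis_tmul m hR, map_sum, Finsupp.finsetSum_apply,
    Basis.tensorProduct_repr_tmul_apply, Finsupp.single_apply, mul_ite, Finset.sum_ite_eq',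
    mul_comm]

theorem repr_R12_comp_R23_basis_tmul
    (hR : ∀ u v, R (m v ⊗ₜ m u) = ∑ i, ∑ j, x u v j i • (m i ⊗ₜ m j)) (a b c p q r : ι) :
    (m.tensorProduct (m.tensorProduct m)).repr ((R12 R ∘ₗ R23 R) (m a ⊗ₜ (m b ⊗ₜ m c)))
      (p, q, r) = ∑ v, x c b r v * x v a q p := by
  simp [R23_basis_tmul m hR, R12_basis_tmul m hR, map_sum, Finsupp.finsetSum_apply,
    Basis.tensorProduct_repr_tmul_apply, Finsupp.single_apply, mul_ite, Finset.sum_ite_eq',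
    mul_comm]

theorem repr_R23_comp_R12_basis_tmul
    (hR : ∀ u v, R (m v ⊗ₜ m u) = ∑ i, ∑ j, x u v j i • (m i ⊗ₜ m j)) (a b c p q r : ι) :
    (m.tensorProduct (m.tensorProduct m)).repr ((R23 R ∘ₗ R12 R) (m a ⊗ₜ (m b ⊗ₜ m c)))
      (p, q, r) = ∑ v, x c v r q * x b a v p := by
  simp [R23_basis_tmul m hR, R12_basis_tmul m hR, map_sum, Finsupp.finsetSum_apply,
    Basis.tensorProduct_repr_tmul_apply, Finsupp.single_apply, mul_ite, Finset.sum_ite_eq',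
    mul_comm]

theorem R12_comp_R13_comm_iff
    (hR : ∀ u v, R (m v ⊗ₜ m u) = ∑ i, ∑ j, x u v j i • (m i ⊗ₜ m j)) :
    R12 R ∘ₗ R13 R = R13 R ∘ₗ R12 R ↔
      ∀ i j kk l p q, ∑ v, x kk v j i * x q l p v = ∑ a, x kk l j a * x q a p i := by
  let m₃ := m.tensorProduct (m.tensorProduct m)
  simp only [LinearMap.eq_iff_forall_repr_apply_basis m₃ m₃, Prod.forall, m₃,
    Basis.tensorProduct_apply, repr_R12_comp_R13_basis_tmul m hR,
    repr_R13_comp_R12_basis_tmul m hR]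
  exact ⟨fun h i j kk l p q => h l kk q i j p, fun h a b c p q r => h p q b a r c⟩

theorem R12_comp_R23_comm_iff
    (hR : ∀ u v, R (m v ⊗ₜ m u) = ∑ i, ∑ j, x u v j i • (m i ⊗ₜ m j)) :
    R12 R ∘ₗ R23 R = R23 R ∘ₗ R12 R ↔
      ∀ i j kk l p q, ∑ v, x kk v j i * x l q v p = ∑ a, x kk l j a * x a q i p := by
  let m₃ := m.tensorProduct (m.tensorProduct m)
  simp only [LinearMap.eq_iff_forall_repr_apply_basis m₃ m₃, Prod.forall, m₃,
    Basis.tensorProduct_apply, repr_R12_comp_R23_basis_tmul m hR,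
    repr_R23_comp_R12_basis_tmul m hR]
  exact ⟨fun h i j kk l p q => (h q l kk p i j).symm, fun h a b c p q r => (h q r c b p a).symm⟩

end StructureConstants

theorem long_equation_iff_structure_constants
    {k M : Type*} [Field k] [AddCommGroup M] [Module k M]
    {n : ℕ} (m : Module.Basis (Fin n) k M)
    (x : Fin n → Fin n → Fin n → Fin n → k)
    (R : M ⊗[k] M →ₗ[k] M ⊗[k] M)
    (hR : ∀ u v, R (m v ⊗ₜ[k] m u) = ∑ i, ∑ j, x u v j i • (m i ⊗ₜ[k] m j)) :
    IsLongSolution R ↔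
      ((∀ i j kk l p q, ∑ v, x kk v j i * x q l p v = ∑ a, x kk l j a * x q a p i) ∧
       (∀ i j kk l p q, ∑ v, x kk v j i * x l q v p = ∑ a, x kk l j a * x a q i p)) :=
  and_congr (R12_comp_R13_comm_iff m hR) (R12_comp_R23_comm_iff m hR)
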